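/- Let B > 0, let q be a probability density on ℝ supported in [−B,B], and let p_T be a probability density on ℝ with m₁ = ∫_ℝ |x| p_T(x) dx < ∞. Then for every α ∈ (0,1), F(α) = −∫_ℝ p_T(x) log H(α,x) dx is well defined and satisfies |F(α)| ≤ ((1−α)² B² + 2(1−α) B m₁)/(2α²). -/

import Mathlib

/-!
For `ν` in the support `[-B, B]` of `q`, the exponent in `H(α, x)` is bounded in absolute value by
`M(x) = ((1-α)² B² + 2(1-α) B |x|)/(2α²)`. Since `q` is a probability density, `H(α, x)` is an
average of exponentials lying in `[exp(-M(x)), exp(M(x))]`, so `|log H(α, x)| ≤ M(x)`. This bound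
is affine in `|x|`, hence integrable against `p_T` thanks to the finite first moment, and
integrating it gives the estimate.
-/

open MeasureTheory Real Filter
open scoped ENNReal Topology

/-- The correction factor `H(α,x) = ∫ ν, exp(-(1/(2α²))((1-α)² ν² - 2(1-α) x ν)) q(ν) dν`. -/
noncomputable def Hfun (q : ℝ → ℝ) (α x : ℝ) : ℝ :=
  ∫ ν : ℝ, Real.exp (-(1 / (2 * α ^ 2)) * ((1 - α) ^ 2 * ν ^ 2 - 2 * (1 - α) * x * ν)) * q ν

theorem abs_log_le_of_mem_Icc_exp {y M : ℝ} (h : y ∈ Set.Icc (exp (-M)) (exp M)) :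
    |log y| ≤ M := by
  have hy : 0 < y := (exp_pos _).trans_le h.1
  rw [abs_le, le_log_iff_exp_le hy, log_le_iff_le_exp hy]
  exact h

section Density

variable {Ω : Type*} [MeasurableSpace Ω] {μ : Measure Ω} {q g : Ω → ℝ} {M : ℝ}

theorem integral_exp_mul_density_mem_Icc (hq_nonneg : ∀ ν, 0 ≤ q ν)
    (hq_one : ∫ ν, q ν ∂μ = 1) (hg : AEStronglyMeasurable g μ)
    (hgM : ∀ ν, q ν ≠ 0 → |g ν| ≤ M) :
    ∫ ν, exp (g ν) * q ν ∂μ ∈ Set.Icc (exp (-M)) (exp M) := by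
  have hq_int : Integrable q μ := .of_integral_ne_zero (by simp [hq_one])
  have hsandwich : ∀ ν, exp (-M) * q ν ≤ exp (g ν) * q ν ∧ exp (g ν) * q ν ≤ exp M * q ν := by
    intro ν
    by_cases hν : q ν = 0
    · simp [hν]
    · obtain ⟨hlow, hhigh⟩ := abs_le.mp (hgM ν hν)
      exact ⟨by gcongr; exact hq_nonneg ν, by gcongr; exact hq_nonneg ν⟩
  have hint : Integrable (fun ν => exp (g ν) * q ν) μ := by
    refine (hq_int.const_mul (exp M)).mono'
      ((continuous_exp.comp_aestronglyMeasurable hg).mul hq_int.aestronglyMeasurable)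
      (ae_of_all _ fun ν => ?_)
    rw [norm_of_nonneg (mul_nonneg (exp_pos _).le (hq_nonneg ν))]
    exact (hsandwich ν).2
  have hconst : ∀ c, ∫ ν, c * q ν ∂μ = c := fun c => by rw [integral_const_mul, hq_one, mul_one]
  constructor
  · calc exp (-M) = ∫ ν, exp (-M) * q ν ∂μ := (hconst _).symm
      _ ≤ _ := integral_mono (hq_int.const_mul _) hint fun ν => (hsandwich ν).1
  · calc ∫ ν, exp (g ν) * q ν ∂μ ≤ ∫ ν, exp M * q ν ∂μ :=
          integral_mono hint (hq_int.const_mul _) fun ν => (hsandwich ν).2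
      _ = exp M := hconst _

end Density

theorem abs_sq_mul_sq_sub_two_mul_le {a B x ν : ℝ} (ha : 0 ≤ a) (hν : |ν| ≤ B) :
    |a ^ 2 * ν ^ 2 - 2 * a * x * ν| ≤ a ^ 2 * B ^ 2 + 2 * a * B * |x| := by
  calc |a ^ 2 * ν ^ 2 - 2 * a * x * ν| ≤ |a ^ 2 * ν ^ 2| + |2 * a * x * ν| := abs_sub _ _
    _ = a ^ 2 * |ν| ^ 2 + 2 * a * |x| * |ν| := by
        simp only [abs_mul, abs_pow, sq_abs, abs_two, abs_of_nonneg ha]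
    _ ≤ a ^ 2 * B ^ 2 + 2 * a * |x| * B := by gcongr
    _ = a ^ 2 * B ^ 2 + 2 * a * B * |x| := by ring

theorem abs_log_Hfun_le {B : ℝ} {q : ℝ → ℝ} (hq_nonneg : ∀ x, 0 ≤ q x)
    (hq_one : ∫ x, q x = 1) (hq_supp : Function.support q ⊆ Set.Icc (-B) B)
    {α : ℝ} (hα : α ≤ 1) (x : ℝ) :
    |log (Hfun q α x)| ≤ ((1 - α) ^ 2 * B ^ 2 + 2 * (1 - α) * B * |x|) / (2 * α ^ 2) := by
  refine abs_log_le_of_mem_Icc_exp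
    (integral_exp_mul_density_mem_Icc hq_nonneg hq_one (by fun_prop) fun ν hν => ?_)
  have hνB : |ν| ≤ B := abs_le.mpr (hq_supp hν)
  rw [abs_mul, abs_neg, abs_of_nonneg (by positivity), one_div_mul_eq_div]
  gcongr
  exact abs_sq_mul_sq_sub_two_mul_le (sub_nonneg.mpr hα) hνB

theorem aestronglyMeasurable_Hfun {q : ℝ → ℝ} (hq : AEStronglyMeasurable q) (α : ℝ) :
    AEStronglyMeasurable (Hfun q α) := by
  refine AEStronglyMeasurable.integral_prod_right' (f := fun p : ℝ × ℝ =>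
    exp (-(1 / (2 * α ^ 2)) * ((1 - α) ^ 2 * p.2 ^ 2 - 2 * (1 - α) * p.1 * p.2)) * q p.2) ?_
  exact (Continuous.aestronglyMeasurable (by fun_prop)).mul
    (hq.comp_quasiMeasurePreserving Measure.quasiMeasurePreserving_snd)

theorem integrable_mul_and_abs_integral_le_of_abs_le {p f : ℝ → ℝ} {a b : ℝ}
    (hp_nonneg : ∀ x, 0 ≤ p x) (hp_one : ∫ x, p x = 1)
    (hp_mom : Integrable (fun x => |x| * p x)) (hf : AEStronglyMeasurable f)
    (hfab : ∀ x, |f x| ≤ a + b * |x|) :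
    Integrable (fun x => p x * f x) ∧ |∫ x, p x * f x| ≤ a + b * ∫ x, |x| * p x := by
  have hp_int : Integrable p := .of_integral_ne_zero (by simp [hp_one])
  have hdom : Integrable (fun x => a * p x + b * (|x| * p x)) :=
    (hp_int.const_mul a).add (hp_mom.const_mul b)
  have hpf : ∀ x, |p x * f x| ≤ a * p x + b * (|x| * p x) := fun x => by
    rw [abs_mul, abs_of_nonneg (hp_nonneg x)]
    nlinarith [mul_le_mul_of_nonneg_left (hfab x) (hp_nonneg x)]
  have hint : Integrable (fun x => p x * f x) :=
    hdom.mono' (hp_int.aestronglyMeasurable.mul hf) (ae_of_all _ hpf)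
  refine ⟨hint, ?_⟩
  calc |∫ x, p x * f x| ≤ ∫ x, |p x * f x| := abs_integral_le_integral_abs
    _ ≤ ∫ x, a * p x + b * (|x| * p x) := integral_mono hint.abs hdom hpf
    _ = a + b * ∫ x, |x| * p x := by
        rw [integral_add (hp_int.const_mul a) (hp_mom.const_mul b), integral_const_mul,
          integral_const_mul, hp_one, mul_one]

theorem statement9_general (B : ℝ)
    (q : ℝ → ℝ) (hq_meas : Measurable q) (hq_nonneg : ∀ x, 0 ≤ q x)
    (hq_one : ∫ x, q x = 1) (hq_supp : Function.support q ⊆ Set.Icc (-B) B)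
    (pT : ℝ → ℝ) (hpT_nonneg : ∀ x, 0 ≤ pT x)
    (hpT_one : ∫ x, pT x = 1)
    (hpT_mom : Integrable (fun x => |x| * pT x)) :
    ∀ α ∈ Set.Ioo (0 : ℝ) 1,
      Integrable (fun x => pT x * Real.log (Hfun q α x)) ∧
      |-∫ x : ℝ, pT x * Real.log (Hfun q α x)|
        ≤ ((1 - α) ^ 2 * B ^ 2 + 2 * (1 - α) * B * (∫ x : ℝ, |x| * pT x)) / (2 * α ^ 2) := by
  rintro α ⟨-, hα⟩
  have hlog_meas : AEStronglyMeasurable fun x => log (Hfun q α x) :=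
    (measurable_log.comp_aemeasurable
      (aestronglyMeasurable_Hfun hq_meas.aestronglyMeasurable α).aemeasurable).aestronglyMeasurable
  obtain ⟨hint, hbound⟩ := integrable_mul_and_abs_integral_le_of_abs_le
    (a := (1 - α) ^ 2 * B ^ 2 / (2 * α ^ 2)) (b := 2 * (1 - α) * B / (2 * α ^ 2))
    hpT_nonneg hpT_one hpT_mom hlog_meas
    fun x => (abs_log_Hfun_le hq_nonneg hq_one hq_supp hα.le x).trans_eq (by ring)
  refine ⟨hint, ?_⟩
  rw [abs_neg]
  exact hbound.trans_eq (by ring)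

/-- If `q` is a probability density supported in `[-B,B]` and `p_T` is a probability density
with finite first absolute moment `m₁`, then for every `α ∈ (0,1)`,
`F(α) = -∫ p_T(x) log H(α,x) dx` is well defined and
`|F(α)| ≤ ((1-α)² B² + 2(1-α) B m₁)/(2α²)`. -/
theorem statement9 (B : ℝ) (hB : 0 < B)
    (q : ℝ → ℝ) (hq_meas : Measurable q) (hq_nonneg : ∀ x, 0 ≤ q x)
    (hq_one : ∫ x, q x = 1) (hq_supp : Function.support q ⊆ Set.Icc (-B) B)
    (pT : ℝ → ℝ) (hpT_meas : Measurable pT) (hpT_nonneg : ∀ x, 0 ≤ pT x)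
    (hpT_one : ∫ x, pT x = 1)
    (hpT_mom : Integrable (fun x => |x| * pT x)) :
    ∀ α ∈ Set.Ioo (0 : ℝ) 1,
      Integrable (fun x => pT x * Real.log (Hfun q α x)) ∧
      |-∫ x : ℝ, pT x * Real.log (Hfun q α x)|
        ≤ ((1 - α) ^ 2 * B ^ 2 + 2 * (1 - α) * B * (∫ x : ℝ, |x| * pT x)) / (2 * α ^ 2) :=
  statement9_general B q hq_meas hq_nonneg hq_one hq_supp pT hpT_nonneg hpT_one hpT_mom
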